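/- arXiv:1810.13256 — 4 statements merged into one kernel-verified Lean document; each statement's English description precedes it below -/
import Mathlib

section
/- Fix α with 1 ≤ α ≤ 3/2, constants ε > 0, δ ∈ (0, 1], and γ ∈ (0, 1/(4√2)]. For P > 1 let Q = P^{(α/3−ε)/2}. Given channel coefficients (h₁₁, h₁₂, h₂₁, h₂₂) ∈ (1,2]⁴, let v₁c, v₂c, u₁, u₂ be independent random variables each uniformly distributed on Ω(2γ/Q, Q), mutually independent and independent of z₁ distributed as the Gaussian measure N(0, 1), and define y₁ = √(P^{2−α})·h₁₁h₂₂·v₁c + √P·h₁₂h₁₁·(v₂c + u₁) + √(P^{α})·h₁₂h₂₁·u₂ + z₁. Then for every η > 0 there exists P₀ such that for every P ≥ P₀ for which P^{(α−1)/2} is a positive integer, there exists a measurable outage set H̄₀ ⊆ (1,2]⁴ of four-dimensional Lebesgue measure at most 258048·δ·P^{−ε/2} such that for every (h₁₁, h₁₂, h₂₁, h₂₂) ∈ (1,2]⁴ \ H̄₀ there is a Borel-measurable function f : ℝ → ℝ with ℙ[ f(y₁) = v₁c ] > 1 − η. -/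
/-!
Write `v₁c = ξ a`, `v₂c + u₁ = ξ s`, `u₂ = ξ d` with `ξ = 2γ/Q` and integers `|a|, |d| ≤ Q`,
`|s| ≤ 2Q`, so that `y₁ = ξ L_h(a, s, d) + z₁` for a linear form `L_h` on `ℤ³` depending on the
channel `h`. If `|L_h(n)| ≥ κ := T Q / γ` for every difference `n` of such triples with `n₁ ≠ 0`,
codewords with different `a` are `2T` apart, and a nearest-codeword decoder recovers `v₁c` on the
event `|z₁| < T`, whose Gaussian probability exceeds `1 - η` once `T` is large.

The outage set consists of the channels violating this. For fixed `n`, the condition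
`|L_h(n)| < κ` confines `h₂₁` to an interval of length at most `2κ / (√(P^α) |n₃|)`, or, when
`n₃ = 0`, `h₁₂` to one of length at most `2κ / (√P |n₂|)`; it is void when `n₂ = n₃ = 0` because
`κ ≤ √(P^(2-α))`.
Summing over `n` with harmonic sums gives a volume `O((T/γ) log P · P^(-ε))`, which is below
`258048 δ P^(-ε/2)` for large `P`.
-/

open MeasureTheory ProbabilityTheory Real

/-- The PAM constellation `Ω(ξ, Q) = { ξ·a : a ∈ ℤ, −Q ≤ a ≤ Q }`. -/
def PAM (ξ Q : ℝ) : Set ℝ :=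
  {x | ∃ a : ℤ, x = ξ * a ∧ -Q ≤ (a : ℝ) ∧ (a : ℝ) ≤ Q}

/-- The hypercube `(1,2]⁴ ⊆ ℝ⁴`. -/
def channelCube : Set (ℝ × ℝ × ℝ × ℝ) :=
  (Set.Ioc 1 2) ×ˢ (Set.Ioc 1 2) ×ˢ (Set.Ioc 1 2) ×ˢ (Set.Ioc 1 2)

open Filter Set
open scoped ENNReal Topology

lemma PAM_finite (ξ Q : ℝ) : (PAM ξ Q).Finite := by
  refine ((Set.finite_Icc ⌈-Q⌉ ⌊Q⌋).image fun a : ℤ => ξ * a).subset ?_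
  rintro x ⟨a, rfl, ha, ha'⟩
  exact ⟨a, ⟨Int.ceil_le.2 (mod_cast ha), Int.le_floor.2 ha'⟩, rfl⟩

lemma exists_natAbs_le_floor_of_mem_PAM {ξ Q x : ℝ} (hx : x ∈ PAM ξ Q) :
    ∃ a : ℤ, x = ξ * a ∧ a.natAbs ≤ ⌊Q⌋₊ := by
  obtain ⟨a, rfl, ha, ha'⟩ := hx
  refine ⟨a, rfl, Nat.le_floor ?_⟩
  rw [Nat.cast_natAbs, Int.cast_abs]
  exact abs_le.2 ⟨ha, ha'⟩

lemma ae_mem_of_map_eq_uniformOn {Ω α : Type*} [MeasurableSpace Ω] [MeasurableSpace α]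
    [MeasurableSingletonClass α] {μ : Measure Ω} {X : Ω → α} {s : Set α} (hX : Measurable X)
    (hs : s.Finite) (hμ : μ.map X = uniformOn s) :
    ∀ᵐ ω ∂μ, X ω ∈ s :=
  ae_of_ae_map hX.aemeasurable <| by
    rw [hμ, ae_iff, uniformOn_eq_zero_iff hs]
    exact inter_compl_self s

lemma exists_lt_measure_Ioo {μ : Measure ℝ} {c : ℝ≥0∞} (hc : c < μ univ) :
    ∃ T > 0, c < μ (Ioo (-T) T) := by
  have hlim := tendsto_measure_iUnion_atTop (μ := μ)
    (fun m n (hmn : m ≤ n) => Metric.ball_subset_ball (x := (0 : ℝ)) (Nat.cast_le.2 hmn))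
  rw [Metric.iUnion_ball_nat] at hlim
  obtain ⟨n, hn⟩ := ((hlim.eventually_const_lt hc).and (eventually_gt_atTop 0)).exists
  refine ⟨n, Nat.cast_pos.2 hn.2, ?_⟩
  simpa [Real.ball_eq_Ioo] using hn.1

/-- The term `d = 0` vanishes because `0⁻¹ = 0`. -/
lemma sum_Icc_inv_abs_eq_two_mul_harmonic (n : ℕ) :
    ∑ d ∈ Finset.Icc (-(n : ℤ)) n, |(d : ℝ)|⁻¹ = 2 * harmonic n := by
  induction n with
  | zero => simp
  | succ n ih =>
    have hIcc : Finset.Icc (-((n + 1 : ℕ) : ℤ)) (n + 1 : ℕ)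
        = insert (-((n + 1 : ℕ) : ℤ)) (insert ((n + 1 : ℕ) : ℤ) (Finset.Icc (-(n : ℤ)) n)) := by
      ext d
      simp only [Finset.mem_Icc, Finset.mem_insert]
      omega
    rw [hIcc, Finset.sum_insert (by simp; omega), Finset.sum_insert (by simp), ih, harmonic_succ]
    push_cast
    rw [abs_neg, abs_of_pos (by positivity)]
    ring

lemma sum_Icc_inv_abs_le (n : ℕ) :
    ∑ d ∈ Finset.Icc (-(n : ℤ)) n, |(d : ℝ)|⁻¹ ≤ 2 * (1 + Real.log n) := by
  rw [sum_Icc_inv_abs_eq_two_mul_harmonic]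
  exact mul_le_mul_of_nonneg_left (harmonic_le_one_add_log n) zero_le_two

lemma exists_measurable_decoder {ι E : Type*} [NormedAddCommGroup E] [MeasurableSpace E]
    [OpensMeasurableSpace E] (I : Finset ι) (x : ι → E) (ℓ : ι → ℝ) {T : ℝ}
    (hsep : ∀ i ∈ I, ∀ j ∈ I, ℓ i ≠ ℓ j → 2 * T ≤ ‖x i - x j‖) :
    ∃ f : E → ℝ, Measurable f ∧ ∀ i ∈ I, ∀ z : E, ‖z‖ < T → f (x i + z) = ℓ i := by
  classical
  let U : ℝ → Set E := fun c => ⋃ j ∈ I.filter (ℓ · = c), Metric.ball (x j) T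
  refine ⟨fun y => ∑ c ∈ I.image ℓ, (U c).indicator (fun _ => c) y,
    Finset.measurable_sum _ fun c _ => measurable_const.indicator
      (Finset.measurableSet_biUnion _ fun j _ => measurableSet_ball), fun i hi z hz => ?_⟩
  dsimp only
  rw [Finset.sum_eq_single (ℓ i)]
  · have hmem : x i + z ∈ U (ℓ i) := by
      refine mem_iUnion₂.2 ⟨i, Finset.mem_filter.2 ⟨hi, rfl⟩, ?_⟩
      rwa [Metric.mem_ball, dist_eq_norm, add_sub_cancel_left]
    exact indicator_of_mem hmem _
  · intro c _ hc
    refine indicator_of_notMem (fun hy => ?_) _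
    obtain ⟨j, hj, hyj⟩ := mem_iUnion₂.1 hy
    rw [Finset.mem_filter] at hj
    have hfar := hsep i hi j hj.1 (hj.2 ▸ Ne.symm hc)
    have htri : ‖x i - x j‖ ≤ ‖x i + z - x j‖ + ‖z‖ := by
      simpa [add_sub_right_comm] using norm_sub_le (x i + z - x j) z
    rw [Metric.mem_ball, dist_eq_norm] at hyj
    linarith
  · exact fun h => absurd (Finset.mem_image_of_mem ℓ hi) h

section Slices

variable {α β : Type*} [MeasurableSpace α] [MeasurableSpace β] {μ : Measure α} {ν : Measure β}
  {S : Set (α × β)} {c : ℝ≥0∞}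

lemma MeasureTheory.Measure.prod_apply_le_of_forall_slice_le [SFinite ν] (hS : MeasurableSet S)
    {A : Set α} (hA : MeasurableSet A) (hSA : S ⊆ A ×ˢ univ)
    (h : ∀ x ∈ A, ν (Prod.mk x ⁻¹' S) ≤ c) : μ.prod ν S ≤ c * μ A := by
  rw [Measure.prod_apply hS, ← lintegral_indicator_const hA]
  refine lintegral_mono fun x => ?_
  by_cases hx : x ∈ A
  · simpa [hx] using h x hx
  · have : Prod.mk x ⁻¹' S = ∅ := eq_empty_of_forall_notMem fun y hy => hx (hSA hy).1
    simp [this]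

lemma MeasureTheory.Measure.prod_apply_le_of_forall_slice_le_symm [SFinite μ] [SFinite ν]
    (hS : MeasurableSet S) {B : Set β} (hB : MeasurableSet B) (hSB : S ⊆ univ ×ˢ B)
    (h : ∀ y ∈ B, μ ((·, y) ⁻¹' S) ≤ c) : μ.prod ν S ≤ c * ν B := by
  rw [Measure.prod_apply_symm hS, ← lintegral_indicator_const hB]
  refine lintegral_mono fun y => ?_
  by_cases hy : y ∈ B
  · simpa [hy] using h y hy
  · have : (·, y) ⁻¹' S = ∅ := eq_empty_of_forall_notMem fun x hx => hy (hSB hx).2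
    simp [this]

end Slices

lemma volume_le_of_forall_slice_thd_le {S : Set (ℝ × ℝ × ℝ × ℝ)} (hS : MeasurableSet S)
    (hSC : S ⊆ channelCube) {c : ℝ≥0∞}
    (h : ∀ x ∈ Ioc (1 : ℝ) 2, ∀ y ∈ Ioc (1 : ℝ) 2, ∀ w ∈ Ioc (1 : ℝ) 2,
      volume {z | (x, y, z, w) ∈ S} ≤ c) :
    volume S ≤ c := by
  rw [Measure.volume_eq_prod]
  refine (Measure.prod_apply_le_of_forall_slice_le (c := c) hS measurableSet_Ioc
    (fun p hp => ⟨(hSC hp).1, trivial⟩) fun x hx => ?_).trans (by norm_num)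
  have hSx : MeasurableSet (Prod.mk x ⁻¹' S) := hS.preimage measurable_prodMk_left
  rw [Measure.volume_eq_prod]
  refine (Measure.prod_apply_le_of_forall_slice_le (c := c) hSx measurableSet_Ioc
    (fun p hp => ⟨(hSC hp).2.1, trivial⟩) fun y hy => ?_).trans (by norm_num)
  rw [Measure.volume_eq_prod]
  refine (Measure.prod_apply_le_of_forall_slice_le_symm (c := c)
    (hSx.preimage measurable_prodMk_left) measurableSet_Ioc
    (fun p hp => ⟨trivial, (hSC hp).2.2.2⟩) fun w hw => ?_).trans (by norm_num)
  exact h x hx y hy w hw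

lemma volume_le_of_forall_slice_snd_le {S : Set (ℝ × ℝ × ℝ × ℝ)} (hS : MeasurableSet S)
    (hSC : S ⊆ channelCube) {c : ℝ≥0∞}
    (h : ∀ x ∈ Ioc (1 : ℝ) 2, ∀ z ∈ Ioc (1 : ℝ) 2, ∀ w ∈ Ioc (1 : ℝ) 2,
      volume {y | (x, y, z, w) ∈ S} ≤ c) :
    volume S ≤ c := by
  rw [Measure.volume_eq_prod]
  refine (Measure.prod_apply_le_of_forall_slice_le (c := c) hS measurableSet_Ioc
    (fun p hp => ⟨(hSC hp).1, trivial⟩) fun x hx => ?_).trans (by norm_num)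
  rw [Measure.volume_eq_prod]
  refine (Measure.prod_apply_le_of_forall_slice_le_symm (c := c)
    (hS.preimage measurable_prodMk_left) (measurableSet_Ioc.prod measurableSet_Ioc)
    (fun p hp => ⟨trivial, (hSC hp).2.2⟩) fun zw hzw => ?_).trans ?_
  · exact h x hx zw.1 hzw.1 zw.2 hzw.2
  · rw [Measure.volume_eq_prod, Measure.prod_prod]; norm_num

lemma volume_setOf_abs_add_mul_lt_le (a : ℝ) {b B κ : ℝ} (hB : 0 < B) (hBb : B ≤ |b|)
    (hκ : 0 ≤ κ) : volume {x : ℝ | |a + b * x| < κ} ≤ ENNReal.ofReal (2 * κ / B) := by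
  have hb : b ≠ 0 := abs_pos.1 (hB.trans_le hBb)
  have : {x : ℝ | |a + b * x| < κ} = (b * ·) ⁻¹' Metric.ball (-a) κ := by
    ext x
    simp [Real.dist_eq, add_comm]
  rw [this, Real.volume_preimage_mul_left hb, Real.volume_ball,
    ← ENNReal.ofReal_mul (by positivity), abs_inv, inv_mul_eq_div]
  exact ENNReal.ofReal_le_ofReal (div_le_div_of_nonneg_left (by positivity) hB hBb)

/-- Contains the differences `(a - a', s - s', d - d')` with `a ≠ a'` of index triples with
`|a|, |d| ≤ m` and `|s| ≤ 2m`. -/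
noncomputable def diffBox (m : ℕ) : Finset (ℤ × ℤ × ℤ) :=
  (Finset.Icc (-(2 * m : ℤ)) (2 * m)).erase 0 ×ˢ Finset.Icc (-(4 * m : ℤ)) (4 * m) ×ˢ
    Finset.Icc (-(2 * m : ℤ)) (2 * m)

lemma sum_diffBox (m : ℕ) (f g : ℤ → ℝ) :
    ∑ n ∈ diffBox m, (f n.2.2 + if n.2.2 = 0 then g n.2.1 else 0)
      = 4 * m * ((8 * m + 1) * ∑ d ∈ Finset.Icc (-(2 * m : ℤ)) (2 * m), f d
          + ∑ s ∈ Finset.Icc (-(4 * m : ℤ)) (4 * m), g s) := by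
  have h0 : (0 : ℤ) ∈ Finset.Icc (-(2 * m : ℤ)) (2 * m) := by simp
  have hcard₁ : ((Finset.Icc (-(2 * m : ℤ)) (2 * m)).erase 0).card = 4 * m := by
    rw [Finset.card_erase_of_mem h0, Int.card_Icc]; omega
  have hcard₂ : (Finset.Icc (-(4 * m : ℤ)) (4 * m)).card = 8 * m + 1 := by
    rw [Int.card_Icc]; omega
  simp only [diffBox, Finset.sum_product, Finset.sum_add_distrib, Finset.sum_ite_eq', h0,
    if_true, Finset.sum_const, hcard₁, hcard₂, nsmul_eq_mul]
  push_cast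
  ring

noncomputable section Outage

variable (A₁ A₂ A₃ κ : ℝ)

/-- With `v₁c = ξ a`, `v₂c + u₁ = ξ s`, `u₂ = ξ d` and `(A₁, A₂, A₃) = (√(P^(2-α)), √P, √(P^α))`,
the received signal is `y₁ = ξ · latticeSignal A₁ A₂ A₃ h (a, s, d) + z₁`. -/
def latticeSignal (h : ℝ × ℝ × ℝ × ℝ) (n : ℤ × ℤ × ℤ) : ℝ :=
  A₁ * (h.1 * h.2.2.2) * n.1 + A₂ * (h.2.1 * h.1) * n.2.1 + A₃ * (h.2.1 * h.2.2.1) * n.2.2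

def badChannels (n : ℤ × ℤ × ℤ) : Set (ℝ × ℝ × ℝ × ℝ) :=
  channelCube ∩ {h | |latticeSignal A₁ A₂ A₃ h n| < κ}

def outageSet (m : ℕ) : Set (ℝ × ℝ × ℝ × ℝ) :=
  ⋃ n ∈ diffBox m, badChannels A₁ A₂ A₃ κ n

def outageBound (m : ℕ) : ℝ :=
  4 * m * ((8 * m + 1) * (2 * κ / A₃ * ∑ d ∈ Finset.Icc (-(2 * m : ℤ)) (2 * m), |(d : ℝ)|⁻¹)
    + 2 * κ / A₂ * ∑ s ∈ Finset.Icc (-(4 * m : ℤ)) (4 * m), |(s : ℝ)|⁻¹)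

variable {A₁ A₂ A₃ κ}

lemma latticeSignal_sub (h : ℝ × ℝ × ℝ × ℝ) (n n' : ℤ × ℤ × ℤ) :
    latticeSignal A₁ A₂ A₃ h (n - n')
      = latticeSignal A₁ A₂ A₃ h n - latticeSignal A₁ A₂ A₃ h n' := by
  simp only [latticeSignal, Prod.fst_sub, Prod.snd_sub, Int.cast_sub]
  ring

lemma measurableSet_badChannels (n : ℤ × ℤ × ℤ) :
    MeasurableSet (badChannels A₁ A₂ A₃ κ n) := by
  have hcube : MeasurableSet channelCube :=
    measurableSet_Ioc.prod (measurableSet_Ioc.prod (measurableSet_Ioc.prod measurableSet_Ioc))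
  refine hcube.inter (measurableSet_lt (Measurable.abs ?_) measurable_const)
  unfold latticeSignal
  fun_prop

lemma measurableSet_outageSet (m : ℕ) : MeasurableSet (outageSet A₁ A₂ A₃ κ m) :=
  Finset.measurableSet_biUnion _ fun n _ => measurableSet_badChannels n

lemma outageSet_subset_channelCube (m : ℕ) : outageSet A₁ A₂ A₃ κ m ⊆ channelCube :=
  iUnion₂_subset fun _ _ => inter_subset_left

lemma volume_badChannels_le_of_thd_ne_zero (hA₃ : 0 < A₃) (hκ : 0 ≤ κ) {n : ℤ × ℤ × ℤ}
    (hn : n.2.2 ≠ 0) :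
    volume (badChannels A₁ A₂ A₃ κ n) ≤ ENNReal.ofReal (2 * κ / A₃ * |(n.2.2 : ℝ)|⁻¹) := by
  rw [← div_eq_mul_inv, div_div]
  refine volume_le_of_forall_slice_thd_le (measurableSet_badChannels n) inter_subset_left
    fun x _ y hy w _ => (measure_mono fun z hz => ?_).trans
      (volume_setOf_abs_add_mul_lt_le (A₁ * (x * w) * n.1 + A₂ * (y * x) * n.2.1)
        (b := A₃ * y * n.2.2) (by positivity) ?_ hκ)
  · simpa only [mem_ofPred_eq, latticeSignal, ← add_assoc, mul_assoc, mul_comm z] using hz.2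
  · rw [abs_mul, abs_mul, abs_of_pos hA₃, abs_of_pos (by linarith [hy.1] : 0 < y)]
    exact mul_le_mul_of_nonneg_right (le_mul_of_one_le_right hA₃.le hy.1.le) (abs_nonneg _)

lemma volume_badChannels_le_of_snd_ne_zero (hA₂ : 0 < A₂) (hκ : 0 ≤ κ) {n : ℤ × ℤ × ℤ}
    (hd : n.2.2 = 0) (hs : n.2.1 ≠ 0) :
    volume (badChannels A₁ A₂ A₃ κ n) ≤ ENNReal.ofReal (2 * κ / A₂ * |(n.2.1 : ℝ)|⁻¹) := by
  rw [← div_eq_mul_inv, div_div]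
  refine volume_le_of_forall_slice_snd_le (measurableSet_badChannels n) inter_subset_left
    fun x hx z _ w _ => (measure_mono fun y hy => ?_).trans
      (volume_setOf_abs_add_mul_lt_le (A₁ * (x * w) * n.1)
        (b := A₂ * x * n.2.1) (by positivity) ?_ hκ)
  · simpa only [mem_ofPred_eq, latticeSignal, hd, Int.cast_zero, mul_zero, add_zero, mul_assoc,
      mul_comm y, mul_left_comm y] using hy.2
  · rw [abs_mul, abs_mul, abs_of_pos hA₂, abs_of_pos (by linarith [hx.1] : 0 < x)]
    exact mul_le_mul_of_nonneg_right (le_mul_of_one_le_right hA₂.le hx.1.le) (abs_nonneg _)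

lemma badChannels_eq_empty (hκ : κ ≤ A₁) {n : ℤ × ℤ × ℤ} (ha : n.1 ≠ 0) (hs : n.2.1 = 0)
    (hd : n.2.2 = 0) : badChannels A₁ A₂ A₃ κ n = ∅ := by
  refine eq_empty_of_forall_notMem fun h hh => ?_
  obtain ⟨⟨hx, -, -, hw⟩, hh⟩ := hh
  have ha' : (1 : ℝ) ≤ |(n.1 : ℝ)| := by exact_mod_cast Int.one_le_abs ha
  have hxw : 1 ≤ h.1 * h.2.2.2 := one_le_mul_of_one_le_of_one_le hx.1.le hw.1.le
  have hA₁ : |A₁| ≤ |A₁| * (h.1 * h.2.2.2) * |(n.1 : ℝ)| := by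
    rw [mul_assoc]
    exact le_mul_of_one_le_right (abs_nonneg _) (one_le_mul_of_one_le_of_one_le hxw ha')
  simp only [mem_ofPred_eq, latticeSignal, hs, hd, Int.cast_zero, mul_zero, add_zero, abs_mul,
    abs_of_pos (by linarith [hx.1] : 0 < h.1),
    abs_of_pos (by linarith [hw.1] : 0 < h.2.2.2)] at hh
  linarith [le_abs_self A₁]

/-- Since `|0|⁻¹ = 0`, the first summand vanishes when `n.2.2 = 0`, and the bound is `0` when
moreover `n.2.1 = 0`. -/
lemma volume_badChannels_le (hA₂ : 0 < A₂) (hA₃ : 0 < A₃) (hκ : 0 ≤ κ) (hκA₁ : κ ≤ A₁)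
    {n : ℤ × ℤ × ℤ} (ha : n.1 ≠ 0) :
    volume (badChannels A₁ A₂ A₃ κ n) ≤ ENNReal.ofReal (2 * κ / A₃ * |(n.2.2 : ℝ)|⁻¹
      + if n.2.2 = 0 then 2 * κ / A₂ * |(n.2.1 : ℝ)|⁻¹ else 0) := by
  by_cases hd : n.2.2 = 0
  · by_cases hs : n.2.1 = 0
    · simp [badChannels_eq_empty hκA₁ ha hs hd]
    · simpa [hd] using volume_badChannels_le_of_snd_ne_zero hA₂ hκ hd hs
  · simpa [hd] using volume_badChannels_le_of_thd_ne_zero hA₃ hκ hd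

lemma volume_outageSet_le (hA₂ : 0 < A₂) (hA₃ : 0 < A₃) (hκ : 0 ≤ κ) (hκA₁ : κ ≤ A₁) (m : ℕ) :
    volume (outageSet A₁ A₂ A₃ κ m) ≤ ENNReal.ofReal (outageBound A₂ A₃ κ m) := by
  rw [outageBound, Finset.mul_sum (a := 2 * κ / A₃), Finset.mul_sum (a := 2 * κ / A₂),
    ← sum_diffBox, ENNReal.ofReal_sum_of_nonneg fun n _ => by positivity]
  refine (measure_biUnion_finset_le _ _).trans (Finset.sum_le_sum fun n hn => ?_)
  refine volume_badChannels_le hA₂ hA₃ hκ hκA₁ ?_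
  simp only [diffBox, Finset.mem_product, Finset.mem_erase] at hn
  exact hn.1.1

lemma exists_decoder_of_mem_diff_outageSet {ξ T Q : ℝ} (hξ : 0 < ξ) (hξκ : ξ * κ = 2 * T)
    {h : ℝ × ℝ × ℝ × ℝ} (hh : h ∈ channelCube \ outageSet A₁ A₂ A₃ κ ⌊Q⌋₊) :
    ∃ f : ℝ → ℝ, Measurable f ∧ ∀ x₁ ∈ PAM ξ Q, ∀ x₂ ∈ PAM ξ Q, ∀ x₃ ∈ PAM ξ Q,
      ∀ x₄ ∈ PAM ξ Q, ∀ z : ℝ, |z| < T →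
        f (A₁ * (h.1 * h.2.2.2) * x₁ + A₂ * (h.2.1 * h.1) * (x₂ + x₃)
          + A₃ * (h.2.1 * h.2.2.1) * x₄ + z) = x₁ := by
  set m := ⌊Q⌋₊
  let I := Finset.Icc (-(m : ℤ)) m ×ˢ Finset.Icc (-(2 * m : ℤ)) (2 * m) ×ˢ
    Finset.Icc (-(m : ℤ)) m
  obtain ⟨f, hf, hdec⟩ := exists_measurable_decoder I (fun n => ξ * latticeSignal A₁ A₂ A₃ h n)
    (fun n => ξ * n.1) (T := T) fun i hi j hj hij => by
      have hmem : i - j ∈ diffBox m := by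
        have hne : i.1 ≠ j.1 := fun heq => hij (by rw [heq])
        simp only [I, diffBox, Finset.mem_product, Finset.mem_Icc, Finset.mem_erase] at hi hj ⊢
        simp only [Prod.fst_sub, Prod.snd_sub]
        omega
      have hκ : κ ≤ |latticeSignal A₁ A₂ A₃ h (i - j)| :=
        not_lt.1 fun hlt => hh.2 (mem_biUnion hmem ⟨hh.1, hlt⟩)
      calc 2 * T = ξ * κ := hξκ.symm
        _ ≤ ξ * |latticeSignal A₁ A₂ A₃ h (i - j)| := mul_le_mul_of_nonneg_left hκ hξ.le
        _ = _ := by rw [latticeSignal_sub, Real.norm_eq_abs, ← mul_sub, abs_mul, abs_of_pos hξ]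
  refine ⟨f, hf, fun x₁ h₁ x₂ h₂ x₃ h₃ x₄ h₄ z hz => ?_⟩
  obtain ⟨a, rfl, ha⟩ := exists_natAbs_le_floor_of_mem_PAM h₁
  obtain ⟨b, rfl, hb⟩ := exists_natAbs_le_floor_of_mem_PAM h₂
  obtain ⟨c, rfl, hc⟩ := exists_natAbs_le_floor_of_mem_PAM h₃
  obtain ⟨d, rfl, hd⟩ := exists_natAbs_le_floor_of_mem_PAM h₄
  have hI : (a, b + c, d) ∈ I := by
    simp only [I, Finset.mem_product, Finset.mem_Icc]
    omega
  convert hdec _ hI z (by rwa [Real.norm_eq_abs]) using 2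
  simp only [latticeSignal, Int.cast_add]
  ring

end Outage

lemma outageBound_le {Q c A₂ A₃ : ℝ} (hQ : 0 ≤ Q) (hc : 0 ≤ c) (hA₂ : 0 < A₂) (hA₃ : 0 < A₃) :
    outageBound A₂ A₃ (c * Q) ⌊Q⌋₊
      ≤ 16 * c * (1 + Real.log (4 * ⌊Q⌋₊)) * (9 * (Q ^ 3 / A₃) + Q ^ 2 / A₂) := by
  set m := ⌊Q⌋₊
  have hm : (m : ℝ) ≤ Q := Nat.floor_le hQ
  have hH₂ : ∑ s ∈ Finset.Icc (-(4 * m : ℤ)) (4 * m), |(s : ℝ)|⁻¹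
      ≤ 2 * (1 + Real.log (4 * m)) := by
    exact_mod_cast sum_Icc_inv_abs_le (4 * m)
  have hH₁ : ∑ d ∈ Finset.Icc (-(2 * m : ℤ)) (2 * m), |(d : ℝ)|⁻¹
      ≤ 2 * (1 + Real.log (4 * m)) :=
    (Finset.sum_le_sum_of_subset_of_nonneg (Finset.Icc_subset_Icc (by omega) (by omega))
      fun _ _ _ => by positivity).trans hH₂
  have hG : 0 ≤ 1 + Real.log (4 * m) := by
    have := Real.log_natCast_nonneg (4 * m)
    push_cast at this
    linarith
  have hmm : (m : ℝ) * (8 * m + 1) ≤ 9 * Q ^ 2 := by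
    have : (m : ℝ) ≤ m ^ 2 := by exact_mod_cast Nat.le_self_pow two_ne_zero m
    nlinarith
  calc _ ≤ 4 * m * ((8 * m + 1) * (2 * (c * Q) / A₃ * (2 * (1 + Real.log (4 * m))))
          + 2 * (c * Q) / A₂ * (2 * (1 + Real.log (4 * m)))) := by unfold outageBound; gcongr
    _ = 16 * c * (1 + Real.log (4 * m)) * (Q * (m * (8 * m + 1)) / A₃ + m * Q / A₂) := by ring
    _ ≤ 16 * c * (1 + Real.log (4 * m)) * (Q * (9 * Q ^ 2) / A₃ + Q * Q / A₂) := by gcongr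
    _ = _ := by ring

lemma sqrt_rpow_eq {P : ℝ} (hP : 0 ≤ P) (x : ℝ) : √(P ^ x) = P ^ (x / 2) := by
  rw [Real.sqrt_eq_rpow, ← Real.rpow_mul hP]
  ring_nf

lemma eventually_mul_log_mul_rpow_neg_le {ε : ℝ} (hε : 0 < ε) (C : ℝ) {K : ℝ} (hK : 0 < K) :
    ∀ᶠ P in atTop, C * (3 + Real.log P) * P ^ (-ε) ≤ K * P ^ (-ε / 2) := by
  have hε2 : 0 < ε / 2 := half_pos hε
  have hlog : Tendsto (fun P => Real.log P * P ^ (-(ε / 2))) atTop (𝓝 0) := by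
    refine (isLittleO_log_rpow_atTop hε2).tendsto_div_nhds_zero.congr' ?_
    filter_upwards [eventually_gt_atTop 0] with P hP
    rw [Real.rpow_neg hP.le, div_eq_mul_inv]
  have hlim : Tendsto (fun P => C * ((3 + Real.log P) * P ^ (-(ε / 2)))) atTop (𝓝 0) := by
    simpa [add_mul] using (((tendsto_rpow_neg_atTop hε2).const_mul 3).add hlog).const_mul C
  filter_upwards [hlim.eventually_lt_const hK, eventually_gt_atTop 0] with P hP hP0
  have hsplit : P ^ (-ε) = P ^ (-(ε / 2)) * P ^ (-ε / 2) := by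
    rw [← Real.rpow_add hP0]; ring_nf
  rw [hsplit, neg_div, ← mul_assoc, mul_assoc C]
  exact mul_le_mul_of_nonneg_right hP.le (Real.rpow_nonneg hP0.le _)

section Regime

variable {P α ε Q : ℝ} (hP : 1 ≤ P) (hα : α ≤ 3 / 2) (hQ : Q = P ^ ((α / 3 - ε) / 2))
include hP hα hQ

lemma mul_le_sqrt_rpow_two_sub {c : ℝ} (hc : c ≤ P ^ (ε / 2)) : c * Q ≤ √(P ^ (2 - α)) := by
  have hP0 : 0 < P := one_pos.trans_le hP
  rw [sqrt_rpow_eq hP0.le, hQ]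
  calc c * P ^ ((α / 3 - ε) / 2) ≤ P ^ (ε / 2) * P ^ ((α / 3 - ε) / 2) :=
        mul_le_mul_of_nonneg_right hc (rpow_nonneg hP0.le _)
    _ = P ^ (ε / 2 + (α / 3 - ε) / 2) := (rpow_add hP0 _ _).symm
    _ ≤ P ^ ((2 - α) / 2) := rpow_le_rpow_of_exponent_le hP (by linarith)

lemma outageBound_le_rpow (hε : 0 < ε) {c : ℝ} (hc : 0 ≤ c) :
    outageBound √P √(P ^ α) (c * Q) ⌊Q⌋₊ ≤ 160 * c * (3 + Real.log P) * P ^ (-ε) := by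
  have hP0 : 0 < P := one_pos.trans_le hP
  have hQ0 : 0 ≤ Q := hQ ▸ rpow_nonneg hP0.le _
  have hQP : Q ≤ P := hQ ▸ (rpow_le_rpow_of_exponent_le hP (by linarith)).trans_eq (rpow_one P)
  have hQ₃ : Q ^ 3 / √(P ^ α) ≤ P ^ (-ε) := by
    rw [hQ, sqrt_rpow_eq hP0.le, ← rpow_natCast, ← rpow_mul hP0.le, ← rpow_sub hP0]
    exact rpow_le_rpow_of_exponent_le hP (by push_cast; linarith)
  have hQ₂ : Q ^ 2 / √P ≤ P ^ (-ε) := by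
    rw [hQ, sqrt_eq_rpow, ← rpow_natCast, ← rpow_mul hP0.le, ← rpow_sub hP0]
    exact rpow_le_rpow_of_exponent_le hP (by push_cast; linarith)
  have hlog : 1 + Real.log (4 * ⌊Q⌋₊) ≤ 3 + Real.log P := by
    rcases (⌊Q⌋₊).eq_zero_or_pos with hm | hm
    · simp [hm]; linarith [Real.log_nonneg hP]
    · have h4 : Real.log 4 < 2 := by
        rw [show (4 : ℝ) = 2 * 2 by norm_num, Real.log_mul two_ne_zero two_ne_zero]
        linarith [Real.log_two_lt_d9]
      have := Real.log_le_log (by positivity) (mul_le_mul_of_nonneg_left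
        ((Nat.floor_le hQ0).trans hQP) zero_le_four)
      rw [Real.log_mul four_ne_zero hP0.ne'] at this
      linarith
  calc _ ≤ 16 * c * (1 + Real.log (4 * ⌊Q⌋₊)) * (9 * (Q ^ 3 / √(P ^ α)) + Q ^ 2 / √P) :=
        outageBound_le hQ0 hc (sqrt_pos.2 hP0) (sqrt_pos.2 (rpow_pos_of_pos hP0 α))
    _ ≤ 16 * c * (3 + Real.log P) * (9 * P ^ (-ε) + P ^ (-ε)) := by
        have := Real.log_nonneg hP
        gcongr
    _ = 160 * c * (3 + Real.log P) * P ^ (-ε) := by ring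

lemma volume_outageSet_le_rpow (hε : 0 < ε) {c : ℝ} (hc₀ : 0 ≤ c) (hc : c ≤ P ^ (ε / 2)) :
    volume (outageSet √(P ^ (2 - α)) √P √(P ^ α) (c * Q) ⌊Q⌋₊)
      ≤ ENNReal.ofReal (160 * c * (3 + Real.log P) * P ^ (-ε)) := by
  have hP0 : 0 < P := one_pos.trans_le hP
  have hQ0 : 0 ≤ Q := hQ ▸ rpow_nonneg hP0.le _
  exact (volume_outageSet_le (sqrt_pos.2 hP0) (sqrt_pos.2 (rpow_pos_of_pos hP0 α))
    (mul_nonneg hc₀ hQ0) (mul_le_sqrt_rpow_two_sub hP hα hQ hc) ⌊Q⌋₊).trans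
      (ENNReal.ofReal_le_ofReal (outageBound_le_rpow hP hα hQ hε hc₀))

end Regime

theorem decoding_with_outage_regime_one_three_halves_general
    (α ε δ γ : ℝ)
    (hα₂ : α ≤ 3 / 2) (hε : 0 < ε)
    (hδ : δ ∈ Set.Ioc (0 : ℝ) 1)
    (hγ₁ : 0 < γ) :
    ∀ η > (0 : ℝ), ∃ P₀ > (1 : ℝ), ∀ P ≥ P₀,
      (∃ n : ℕ, 0 < n ∧ P ^ ((α - 1) / 2) = (n : ℝ)) →
      ∃ H₀ : Set (ℝ × ℝ × ℝ × ℝ), MeasurableSet H₀ ∧ H₀ ⊆ channelCube ∧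
        volume H₀ ≤ ENNReal.ofReal (258048 * δ * P ^ (-ε / 2)) ∧
        ∀ h₁₁ h₁₂ h₂₁ h₂₂ : ℝ, (h₁₁, h₁₂, h₂₁, h₂₂) ∈ channelCube \ H₀ →
          ∀ (Ω : Type) (_ : MeasurableSpace Ω) (μ : Measure Ω) (_ : IsProbabilityMeasure μ)
            (v₁c v₂c u₁ u₂ z₁ : Ω → ℝ),
            Measurable v₁c → Measurable v₂c → Measurable u₁ → Measurable u₂ →
            Measurable z₁ →
            Measure.map v₁c μ
              = uniformOn (PAM (2 * γ / P ^ ((α / 3 - ε) / 2)) (P ^ ((α / 3 - ε) / 2))) →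
            Measure.map v₂c μ
              = uniformOn (PAM (2 * γ / P ^ ((α / 3 - ε) / 2)) (P ^ ((α / 3 - ε) / 2))) →
            Measure.map u₁ μ
              = uniformOn (PAM (2 * γ / P ^ ((α / 3 - ε) / 2)) (P ^ ((α / 3 - ε) / 2))) →
            Measure.map u₂ μ
              = uniformOn (PAM (2 * γ / P ^ ((α / 3 - ε) / 2)) (P ^ ((α / 3 - ε) / 2))) →
            Measure.map z₁ μ = gaussianReal 0 1 →
            iIndepFun
              ![v₁c, v₂c, u₁, u₂, z₁] μ →
            ∃ f : ℝ → ℝ, Measurable f ∧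
              μ {ω | f (Real.sqrt (P ^ (2 - α)) * (h₁₁ * h₂₂) * v₁c ω
                        + Real.sqrt P * (h₁₂ * h₁₁) * (v₂c ω + u₁ ω)
                        + Real.sqrt (P ^ α) * (h₁₂ * h₂₁) * u₂ ω + z₁ ω)
                      = v₁c ω}
                > ENNReal.ofReal (1 - η) := by
  intro η hη
  obtain ⟨T, hT, hTη⟩ := exists_lt_measure_Ioo (μ := gaussianReal 0 1)
    (c := ENNReal.ofReal (1 - η)) (by simpa using hη)
  obtain ⟨P₀, hP₀⟩ := eventually_atTop.1
    (((tendsto_rpow_atTop (half_pos hε)).eventually_ge_atTop (T / γ)).and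
      (eventually_mul_log_mul_rpow_neg_le hε (160 * (T / γ)) (K := 258048 * δ)
        (mul_pos (by norm_num) hδ.1)))
  refine ⟨max P₀ 2, one_lt_two.trans_le (le_max_right _ _), fun P hP _ => ?_⟩
  obtain ⟨hTγ, hvol⟩ := hP₀ P (le_of_max_le_left hP)
  have hP1 : 1 ≤ P := one_le_two.trans (le_of_max_le_right hP)
  set Q := P ^ ((α / 3 - ε) / 2) with hQ
  have hQ0 : 0 < Q := rpow_pos_of_pos (one_pos.trans_le hP1) _
  refine ⟨_, measurableSet_outageSet ⌊Q⌋₊, outageSet_subset_channelCube ⌊Q⌋₊,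
    (volume_outageSet_le_rpow hP1 hα₂ hQ hε (by positivity) hTγ).trans
      (ENNReal.ofReal_le_ofReal hvol), ?_⟩
  intro h₁₁ h₁₂ h₂₁ h₂₂ hh Ω _ μ _ v₁c v₂c u₁ u₂ z₁ hv₁ hv₂ hu₁ hu₂ hz₁ hV₁ hV₂ hU₁ hU₂ hZ₁ _
  obtain ⟨f, hf, hdec⟩ := exists_decoder_of_mem_diff_outageSet (ξ := 2 * γ / Q) (T := T)
    (by positivity) (by field_simp) hh
  have hPAM := PAM_finite (2 * γ / Q) Q
  refine ⟨f, hf, ?_⟩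
  calc ENNReal.ofReal (1 - η) < gaussianReal 0 1 (Ioo (-T) T) := hTη
    _ = μ (z₁ ⁻¹' Ioo (-T) T) := by rw [← hZ₁, Measure.map_apply hz₁ measurableSet_Ioo]
    _ ≤ _ := measure_mono_ae ?_
  filter_upwards [ae_mem_of_map_eq_uniformOn hv₁ hPAM hV₁, ae_mem_of_map_eq_uniformOn hv₂ hPAM hV₂,
    ae_mem_of_map_eq_uniformOn hu₁ hPAM hU₁, ae_mem_of_map_eq_uniformOn hu₂ hPAM hU₂]
    with ω h₁ h₂ h₃ h₄ hz
  exact hdec _ h₁ _ h₂ _ h₃ _ h₄ _ (abs_lt.2 hz)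

/-- In the regime `1 ≤ α ≤ 3/2`, for all channel coefficients outside an outage set of
vanishing Lebesgue measure, `v₁c` can be decoded from `y₁` with error probability
tending to `0` as `P → ∞`. -/
theorem decoding_with_outage_regime_one_three_halves
    (α ε δ γ : ℝ)
    (hα₁ : 1 ≤ α) (hα₂ : α ≤ 3 / 2) (hε : 0 < ε)
    (hδ : δ ∈ Set.Ioc (0 : ℝ) 1)
    (hγ₁ : 0 < γ) (hγ₂ : γ ≤ 1 / (4 * Real.sqrt 2)) :
    ∀ η > (0 : ℝ), ∃ P₀ > (1 : ℝ), ∀ P ≥ P₀,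
      (∃ n : ℕ, 0 < n ∧ P ^ ((α - 1) / 2) = (n : ℝ)) →
      ∃ H₀ : Set (ℝ × ℝ × ℝ × ℝ), MeasurableSet H₀ ∧ H₀ ⊆ channelCube ∧
        volume H₀ ≤ ENNReal.ofReal (258048 * δ * P ^ (-ε / 2)) ∧
        ∀ h₁₁ h₁₂ h₂₁ h₂₂ : ℝ, (h₁₁, h₁₂, h₂₁, h₂₂) ∈ channelCube \ H₀ →
          ∀ (Ω : Type) (_ : MeasurableSpace Ω) (μ : Measure Ω) (_ : IsProbabilityMeasure μ)
            (v₁c v₂c u₁ u₂ z₁ : Ω → ℝ),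
            Measurable v₁c → Measurable v₂c → Measurable u₁ → Measurable u₂ →
            Measurable z₁ →
            Measure.map v₁c μ
              = uniformOn (PAM (2 * γ / P ^ ((α / 3 - ε) / 2)) (P ^ ((α / 3 - ε) / 2))) →
            Measure.map v₂c μ
              = uniformOn (PAM (2 * γ / P ^ ((α / 3 - ε) / 2)) (P ^ ((α / 3 - ε) / 2))) →
            Measure.map u₁ μ
              = uniformOn (PAM (2 * γ / P ^ ((α / 3 - ε) / 2)) (P ^ ((α / 3 - ε) / 2))) →
            Measure.map u₂ μ
              = uniformOn (PAM (2 * γ / P ^ ((α / 3 - ε) / 2)) (P ^ ((α / 3 - ε) / 2))) →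
            Measure.map z₁ μ = gaussianReal 0 1 →
            iIndepFun
              ![v₁c, v₂c, u₁, u₂, z₁] μ →
            ∃ f : ℝ → ℝ, Measurable f ∧
              μ {ω | f (Real.sqrt (P ^ (2 - α)) * (h₁₁ * h₂₂) * v₁c ω
                        + Real.sqrt P * (h₁₂ * h₁₁) * (v₂c ω + u₁ ω)
                        + Real.sqrt (P ^ α) * (h₁₂ * h₂₁) * u₂ ω + z₁ ω)
                      = v₁c ω}
                > ENNReal.ofReal (1 - η) :=
  decoding_with_outage_regime_one_three_halves_general α ε δ γ hα₂ hε hδ hγ₁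
end

section
/- Let α₁₁, α₁₂, α₂₁, α₂₂ ≥ 0 be reals and h₁₁, h₁₂, h₂₁, h₂₂ ∈ (1, 2]. For P > 1 define (logarithms base 2) R₁(P) = (1/2)·log(1 + |h₁₁|²·P^{α₁₁−α₂₁}/(1 + |h₁₂|²)) − (1/2)·log(1 + |h₂₁|²) and R₂(P) = (1/2)·log(1 + |h₂₂|²·P^{α₂₂−α₁₂}/(1 + |h₂₁|²)) − (1/2)·log(1 + |h₁₂|²). Then (R₁(P) + R₂(P)) / ((1/2)·log P) converges to max(α₁₁ − α₂₁, 0) + max(α₂₂ − α₁₂, 0) as P → ∞. -/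
/-! For `c > 0`, `logb b (1 + c * P ^ a) = max a 0 * logb b P + O(1)` as `P → ∞`: for `a > 0`
factor out `P ^ a`, for `a ≤ 0` the argument of the logarithm converges. Bounded terms, in
particular the constant interference penalties, vanish after division by `logb b P`. -/

open Real Filter

theorem tendsto_div_logb_of_tendsto_sub_mul_logb {b m L : ℝ} {f : ℝ → ℝ} (hb : 1 < b)
    (hf : Tendsto (fun x => f x - m * logb b x) atTop (nhds L)) :
    Tendsto (fun x => f x / logb b x) atTop (nhds m) := by
  have hlog := tendsto_logb_atTop hb
  have hdecomp : (fun x => m + (f x - m * logb b x) / logb b x) =ᶠ[atTop]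
      fun x => f x / logb b x := by
    filter_upwards [hlog.eventually_gt_atTop 0] with x hx
    field_simp
    ring
  simpa using (tendsto_const_nhds.add (hf.div_atTop hlog)).congr' hdecomp

/-- The limit is `logb b c`, `logb b (1 + c)` or `0` according as `a > 0`, `a = 0` or `a < 0`. -/
theorem exists_tendsto_logb_one_add_mul_rpow_sub {b c : ℝ} (a : ℝ) (hc : 0 < c) :
    ∃ L, Tendsto (fun P : ℝ => logb b (1 + c * P ^ a) - max a 0 * logb b P) atTop (nhds L) := by
  rcases lt_trichotomy a 0 with ha | rfl | ha
  · refine ⟨logb b 1, ?_⟩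
    have hlim : Tendsto (fun P : ℝ => 1 + c * P ^ a) atTop (nhds 1) := by
      simpa using ((tendsto_rpow_neg_atTop (neg_pos.mpr ha)).const_mul c).const_add 1
    simpa [max_eq_right ha.le] using hlim.logb one_ne_zero
  · exact ⟨logb b (1 + c), by simp⟩
  · refine ⟨logb b c, ?_⟩
    have hlim : Tendsto (fun P : ℝ => P ^ (-a) + c) atTop (nhds c) := by
      simpa using (tendsto_rpow_neg_atTop ha).add_const c
    have hfactor : (fun P : ℝ => logb b (P ^ (-a) + c)) =ᶠ[atTop]
        fun P => logb b (1 + c * P ^ a) - max a 0 * logb b P := by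
      filter_upwards [eventually_gt_atTop 0] with P hP
      have hsplit : 1 + c * P ^ a = P ^ a * (P ^ (-a) + c) := by
        rw [mul_add, ← rpow_add hP, add_neg_cancel, rpow_zero]
        ring
      rw [hsplit, logb_mul (rpow_pos_of_pos hP a).ne' (by positivity),
        logb_rpow_eq_mul_logb_of_pos hP, max_eq_left ha.le]
      ring
    exact (hlim.logb hc.ne').congr' hfactor

theorem gwc_tin_sum_gdof_general
    (α₁₁ α₁₂ α₂₁ α₂₂ h₁₁ h₁₂ h₂₁ h₂₂ : ℝ)
    (hh₁₁ : h₁₁ ∈ Set.Ioc (1 : ℝ) 2) (hh₂₂ : h₂₂ ∈ Set.Ioc (1 : ℝ) 2) :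
    Tendsto (fun P : ℝ =>
        (((1 / 2) * Real.logb 2 (1 + |h₁₁| ^ 2 * P ^ (α₁₁ - α₂₁) / (1 + |h₁₂| ^ 2))
            - (1 / 2) * Real.logb 2 (1 + |h₂₁| ^ 2))
          + ((1 / 2) * Real.logb 2 (1 + |h₂₂| ^ 2 * P ^ (α₂₂ - α₁₂) / (1 + |h₂₁| ^ 2))
              - (1 / 2) * Real.logb 2 (1 + |h₁₂| ^ 2)))
          / ((1 / 2) * Real.logb 2 P))
      atTop (nhds (max (α₁₁ - α₂₁) 0 + max (α₂₂ - α₁₂) 0)) := by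
  set c₁ := |h₁₁| ^ 2 / (1 + |h₁₂| ^ 2)
  set c₂ := |h₂₂| ^ 2 / (1 + |h₂₁| ^ 2)
  set K := logb 2 (1 + |h₂₁| ^ 2) + logb 2 (1 + |h₁₂| ^ 2)
  have hc₁ : 0 < c₁ := by
    have := hh₁₁.1.trans' one_pos
    positivity
  have hc₂ : 0 < c₂ := by
    have := hh₂₂.1.trans' one_pos
    positivity
  obtain ⟨L₁, hL₁⟩ := exists_tendsto_logb_one_add_mul_rpow_sub (b := 2) (α₁₁ - α₂₁) hc₁
  obtain ⟨L₂, hL₂⟩ := exists_tendsto_logb_one_add_mul_rpow_sub (b := 2) (α₂₂ - α₁₂) hc₂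
  have hsum : Tendsto (fun P : ℝ =>
      logb 2 (1 + c₁ * P ^ (α₁₁ - α₂₁)) + logb 2 (1 + c₂ * P ^ (α₂₂ - α₁₂)) - K
        - (max (α₁₁ - α₂₁) 0 + max (α₂₂ - α₁₂) 0) * logb 2 P) atTop (nhds (L₁ + L₂ - K)) :=
    ((hL₁.add hL₂).sub_const K).congr fun P => by ring
  refine (tendsto_div_logb_of_tendsto_sub_mul_logb one_lt_two hsum).congr fun P => ?_
  simp only [c₁, c₂, K, div_mul_eq_mul_div]
  ring

/-- The GWC-TIN achievable secure sum rate, normalized by `(1/2)·log P`, converges to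
the secure sum GDoF `(α₁₁ − α₂₁)⁺ + (α₂₂ − α₁₂)⁺` as `P → ∞`. -/
theorem gwc_tin_sum_gdof
    (α₁₁ α₁₂ α₂₁ α₂₂ h₁₁ h₁₂ h₂₁ h₂₂ : ℝ)
    (hα₁₁ : 0 ≤ α₁₁) (hα₁₂ : 0 ≤ α₁₂) (hα₂₁ : 0 ≤ α₂₁) (hα₂₂ : 0 ≤ α₂₂)
    (hh₁₁ : h₁₁ ∈ Set.Ioc (1 : ℝ) 2) (hh₁₂ : h₁₂ ∈ Set.Ioc (1 : ℝ) 2)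
    (hh₂₁ : h₂₁ ∈ Set.Ioc (1 : ℝ) 2) (hh₂₂ : h₂₂ ∈ Set.Ioc (1 : ℝ) 2) :
    Tendsto (fun P : ℝ =>
        (((1 / 2) * Real.logb 2 (1 + |h₁₁| ^ 2 * P ^ (α₁₁ - α₂₁) / (1 + |h₁₂| ^ 2))
            - (1 / 2) * Real.logb 2 (1 + |h₂₁| ^ 2))
          + ((1 / 2) * Real.logb 2 (1 + |h₂₂| ^ 2 * P ^ (α₂₂ - α₁₂) / (1 + |h₂₁| ^ 2))
              - (1 / 2) * Real.logb 2 (1 + |h₁₂| ^ 2)))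
          / ((1 / 2) * Real.logb 2 P))
      atTop (nhds (max (α₁₁ - α₂₁) 0 + max (α₂₂ - α₁₂) 0)) :=
  gwc_tin_sum_gdof_general α₁₁ α₁₂ α₂₁ α₂₂ h₁₁ h₁₂ h₂₁ h₂₂ hh₁₁ hh₂₂
end

section
/- Let α₁₁, α₁₂, α₂₁, α₂₂ ≥ 0 be reals and h₁₁, h₁₂, h₂₁, h₂₂ ∈ (1, 2]. For P > 1 define (logarithms base 2) U(P) = (1/2)·log(1 + P^{α₂₂−α₁₂}·|h₂₂|²/|h₁₂|² + P^{α₂₁−max(α₁₁−α₁₂,0)}·|h₂₁|²/|h₁₁|²) + (1/2)·log(1 + P^{α₁₁−α₂₁}·|h₁₁|²/|h₂₁|² + P^{α₁₂−max(α₂₂−α₂₁,0)}·|h₁₂|²/|h₂₂|²) + log 10. Then U(P) / ((1/2)·log P) converges to max(α₂₁ − max(α₁₁ − α₁₂, 0), α₂₂ − α₁₂, 0) + max(α₁₂ − max(α₂₂ − α₂₁, 0), α₁₁ − α₂₁, 0) as P → ∞. -/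
/-!
For `P > 1` each argument `1 + c₁ P^a + c₂ P^b` of a logarithm lies between two positive
constant multiples of `P^m` with `m = max (max a b) 0`, the largest exponent present (the
`1` being `P^0`). Its logarithm is therefore `m log P + O(1)`, and so is `m + o(1)` after
division by `log P`; the additive constant `log 10` disappears in the same way.
-/

open Real Filter Topology

lemma tendsto_log_div_log_of_rpow_bounds {f : ℝ → ℝ} {m c C : ℝ} (hc : 0 < c)
    (hlower : ∀ᶠ P in atTop, c * P ^ m ≤ f P) (hupper : ∀ᶠ P in atTop, f P ≤ C * P ^ m) :
    Tendsto (fun P => log (f P) / log P) atTop (𝓝 m) := by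
  have hC : 0 < C := by
    obtain ⟨P, hlow, hup, hP⟩ := (hlower.and (hupper.and (eventually_gt_atTop 0))).exists
    exact pos_of_mul_pos_left ((mul_pos hc (rpow_pos_of_pos hP m)).trans_le (hlow.trans hup))
      (rpow_pos_of_pos hP m).le
  have hconst (k : ℝ) : Tendsto (fun P => log k / log P + m) atTop (𝓝 m) := by
    simpa using (tendsto_const_nhds.div_atTop tendsto_log_atTop).add_const m
  have hlog_mul {k P : ℝ} (hk : 0 < k) (hP : 1 < P) :
      log (k * P ^ m) / log P = log k / log P + m := by
    have hlogP : 0 < log P := log_pos hP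
    rw [log_mul hk.ne' (rpow_pos_of_pos (by linarith) m).ne', log_rpow (by linarith)]
    field_simp
  refine tendsto_of_tendsto_of_tendsto_of_le_of_le' (hconst c) (hconst C) ?_ ?_
  · filter_upwards [hlower, eventually_gt_atTop 1] with P hlow hP
    have hpos : 0 < c * P ^ m := mul_pos hc (rpow_pos_of_pos (by linarith) m)
    rw [← hlog_mul hc hP]
    exact div_le_div_of_nonneg_right (log_le_log hpos hlow) (log_nonneg hP.le)
  · filter_upwards [hlower, hupper, eventually_gt_atTop 1] with P hlow hup hP
    have hpos : 0 < f P := (mul_pos hc (rpow_pos_of_pos (by linarith) m)).trans_le hlow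
    rw [← hlog_mul hC hP]
    exact div_le_div_of_nonneg_right (log_le_log hpos hup) (log_nonneg hP.le)

section ThreeTerms

variable {P a b c₁ c₂ : ℝ}

lemma min_mul_rpow_max_le_one_add_add (hP : 1 ≤ P) (hc₁ : 0 < c₁) (hc₂ : 0 < c₂) :
    min (min 1 c₁) c₂ * P ^ max (max a b) 0 ≤ 1 + P ^ a * c₁ + P ^ b * c₂ := by
  have hPa : 0 < P ^ a * c₁ := by positivity
  have hPb : 0 < P ^ b * c₂ := by positivity
  rcases max_cases (max a b) 0 with ⟨hm, -⟩ | ⟨hm, -⟩ <;> rw [hm]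
  · rcases max_cases a b with ⟨hab, -⟩ | ⟨hab, -⟩ <;> rw [hab]
    · nlinarith [min_le_right (min 1 c₁) c₂, min_le_right 1 c₁, min_le_left (min 1 c₁) c₂,
        rpow_pos_of_pos (zero_lt_one.trans_le hP) a]
    · nlinarith [min_le_right (min 1 c₁) c₂, rpow_pos_of_pos (zero_lt_one.trans_le hP) b]
  · rw [rpow_zero, mul_one]
    linarith [min_le_left (min 1 c₁) c₂, min_le_left 1 c₁]

lemma one_add_add_le_mul_rpow_max (hP : 1 ≤ P) (hc₁ : 0 ≤ c₁) (hc₂ : 0 ≤ c₂) :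
    1 + P ^ a * c₁ + P ^ b * c₂ ≤ (1 + c₁ + c₂) * P ^ max (max a b) 0 := by
  have h0 : 1 ≤ P ^ max (max a b) 0 := one_le_rpow hP (le_max_right _ _)
  have ha : P ^ a ≤ P ^ max (max a b) 0 :=
    rpow_le_rpow_of_exponent_le hP ((le_max_left a b).trans (le_max_left _ _))
  have hb : P ^ b ≤ P ^ max (max a b) 0 :=
    rpow_le_rpow_of_exponent_le hP ((le_max_right a b).trans (le_max_left _ _))
  nlinarith [mul_le_mul_of_nonneg_right ha hc₁, mul_le_mul_of_nonneg_right hb hc₂]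

lemma tendsto_log_one_add_add_rpow_div_log (hc₁ : 0 < c₁) (hc₂ : 0 < c₂) :
    Tendsto (fun P => log (1 + P ^ a * c₁ + P ^ b * c₂) / log P) atTop
      (𝓝 (max (max a b) 0)) :=
  tendsto_log_div_log_of_rpow_bounds (lt_min (lt_min one_pos hc₁) hc₂)
    ((eventually_ge_atTop 1).mono fun _ hP => min_mul_rpow_max_le_one_add_add hP hc₁ hc₂)
    ((eventually_ge_atTop 1).mono fun _ hP => one_add_add_le_mul_rpow_max hP hc₁.le hc₂.le)

end ThreeTerms

theorem converse_sum_gdof_general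
    (α₁₁ α₁₂ α₂₁ α₂₂ h₁₁ h₁₂ h₂₁ h₂₂ : ℝ)
    (hh₁₁ : h₁₁ ∈ Set.Ioc (1 : ℝ) 2) (hh₁₂ : h₁₂ ∈ Set.Ioc (1 : ℝ) 2)
    (hh₂₁ : h₂₁ ∈ Set.Ioc (1 : ℝ) 2) (hh₂₂ : h₂₂ ∈ Set.Ioc (1 : ℝ) 2) :
    Tendsto (fun P : ℝ =>
        ((1 / 2) * Real.logb 2
            (1 + P ^ (α₂₂ - α₁₂) * |h₂₂| ^ 2 / |h₁₂| ^ 2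
               + P ^ (α₂₁ - max (α₁₁ - α₁₂) 0) * |h₂₁| ^ 2 / |h₁₁| ^ 2)
          + (1 / 2) * Real.logb 2
              (1 + P ^ (α₁₁ - α₂₁) * |h₁₁| ^ 2 / |h₂₁| ^ 2
                 + P ^ (α₁₂ - max (α₂₂ - α₂₁) 0) * |h₁₂| ^ 2 / |h₂₂| ^ 2)
          + Real.logb 2 10)
          / ((1 / 2) * Real.logb 2 P))
      atTop (nhds
        (max (max (α₂₁ - max (α₁₁ - α₁₂) 0) (α₂₂ - α₁₂)) 0
          + max (max (α₁₂ - max (α₂₂ - α₂₁) 0) (α₁₁ - α₂₁)) 0)) := by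
  have hgain {h h' : ℝ} (hh : h ∈ Set.Ioc (1 : ℝ) 2) (hh' : h' ∈ Set.Ioc (1 : ℝ) 2) :
      0 < |h| ^ 2 / |h'| ^ 2 := by
    have := hh.1; have := hh'.1; positivity
  have hlim := ((tendsto_log_one_add_add_rpow_div_log (a := α₂₂ - α₁₂)
      (b := α₂₁ - max (α₁₁ - α₁₂) 0) (hgain hh₂₂ hh₁₂) (hgain hh₂₁ hh₁₁)).add
    (tendsto_log_one_add_add_rpow_div_log (a := α₁₁ - α₂₁) (b := α₁₂ - max (α₂₂ - α₂₁) 0)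
      (hgain hh₁₁ hh₂₁) (hgain hh₁₂ hh₂₂))).add
    ((tendsto_const_nhds (x := 2 * log 10)).div_atTop tendsto_log_atTop)
  rw [add_zero, max_comm (α₂₂ - α₁₂), max_comm (α₁₁ - α₂₁)] at hlim
  refine hlim.congr' ?_
  filter_upwards [eventually_gt_atTop 1] with P hP
  have hlogP : 0 < log P := log_pos hP
  simp only [logb, mul_div_assoc]
  field_simp

/-- The secure sum capacity upper bound, normalized by `(1/2)·log P`, converges to the
corresponding GDoF expression as `P → ∞`. -/
theorem converse_sum_gdof
    (α₁₁ α₁₂ α₂₁ α₂₂ h₁₁ h₁₂ h₂₁ h₂₂ : ℝ)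
    (hα₁₁ : 0 ≤ α₁₁) (hα₁₂ : 0 ≤ α₁₂) (hα₂₁ : 0 ≤ α₂₁) (hα₂₂ : 0 ≤ α₂₂)
    (hh₁₁ : h₁₁ ∈ Set.Ioc (1 : ℝ) 2) (hh₁₂ : h₁₂ ∈ Set.Ioc (1 : ℝ) 2)
    (hh₂₁ : h₂₁ ∈ Set.Ioc (1 : ℝ) 2) (hh₂₂ : h₂₂ ∈ Set.Ioc (1 : ℝ) 2) :
    Tendsto (fun P : ℝ =>
        ((1 / 2) * Real.logb 2
            (1 + P ^ (α₂₂ - α₁₂) * |h₂₂| ^ 2 / |h₁₂| ^ 2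
               + P ^ (α₂₁ - max (α₁₁ - α₁₂) 0) * |h₂₁| ^ 2 / |h₁₁| ^ 2)
          + (1 / 2) * Real.logb 2
              (1 + P ^ (α₁₁ - α₂₁) * |h₁₁| ^ 2 / |h₂₁| ^ 2
                 + P ^ (α₁₂ - max (α₂₂ - α₂₁) 0) * |h₁₂| ^ 2 / |h₂₂| ^ 2)
          + Real.logb 2 10)
          / ((1 / 2) * Real.logb 2 P))
      atTop (nhds
        (max (max (α₂₁ - max (α₁₁ - α₁₂) 0) (α₂₂ - α₁₂)) 0
          + max (max (α₁₂ - max (α₂₂ - α₂₁) 0) (α₁₁ - α₂₁)) 0)) :=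
  converse_sum_gdof_general α₁₁ α₁₂ α₂₁ α₂₂ h₁₁ h₁₂ h₂₁ h₂₂ hh₁₁ hh₁₂ hh₂₁ hh₂₂
end

section
/- Let α₁₁, α₁₂, α₂₁, α₂₂ ≥ 0 be reals and h₁₁, h₁₂, h₂₁, h₂₂ ∈ (1, 2]. For P > 1 define (logarithms base 2) V(P) = (1/2)·log(1 + P^{max(α₁₁−α₂₁,0)}/|h₂₁|²) + (1/2)·log(1 + P^{max(α₂₂−α₁₂,0)}/|h₁₂|²) + (1/2)·log(1 + P^{α₁₁}·|h₁₁|² + P^{α₁₂}·|h₁₂|²) + log 9 and W(P) = (1/2)·log(1 + P^{max(α₂₂−α₁₂,0)}/|h₁₂|²) + (1/2)·log(1 + P^{max(α₁₁−α₂₁,0)}/|h₁₂|²) + (1/2)·log(1 + P^{α₂₂}·|h₂₂|² + P^{α₂₁}·|h₂₁|²) + log 9. Then (V(P) + W(P)) / ((1/2)·log P) converges to max(α₁₁, α₁₂) + max(α₂₂, α₂₁) + 2·max(α₁₁ − α₂₁, 0) + 2·max(α₂₂ − α₁₂, 0) as P → ∞. -/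
/-! Every argument of a logarithm is squeezed, for large `P`, between two positive multiples of
`P ^ e`, where `e ≥ 0` is the largest exponent occurring in it (so the summand `1` is dominated).
Its logarithm is therefore `e · log P + O(1)`; after normalizing by `(1/2) · log P`, in which the
base `2` and the factor `1/2` cancel, each term tends to its exponent and each `log 9` to `0`. -/

open Real Filter Topology

lemma tendsto_log_div_log_of_rpow_bounds_s16 {g : ℝ → ℝ} {a K₁ K₂ : ℝ} (hK₁ : 0 < K₁)
    (hg : ∀ᶠ P in atTop, K₁ * P ^ a ≤ g P ∧ g P ≤ K₂ * P ^ a) :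
    Tendsto (fun P => log (g P) / log P) atTop (𝓝 a) := by
  have h_lim (K : ℝ) : Tendsto (fun P => (log K + a * log P) / log P) atTop (𝓝 a) := by
    have h := ((tendsto_const_nhds (x := log K)).div_atTop tendsto_log_atTop).add_const a
    rw [zero_add] at h
    refine h.congr' ?_
    filter_upwards [eventually_gt_atTop 1] with P hP
    rw [add_div, mul_div_cancel_right₀ _ (log_pos hP).ne']
  have h_log_mul {K P : ℝ} (hK : 0 < K) (hP : 0 < P) : log (K * P ^ a) = log K + a * log P := by
    rw [log_mul hK.ne' (rpow_pos_of_pos hP a).ne', log_rpow hP]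
  have h_bounds : ∀ᶠ P in atTop, (log K₁ + a * log P) / log P ≤ log (g P) / log P ∧
      log (g P) / log P ≤ (log K₂ + a * log P) / log P := by
    filter_upwards [hg, eventually_gt_atTop 1] with P ⟨hlow, hupp⟩ hP
    have hPa : 0 < P ^ a := rpow_pos_of_pos (by linarith) a
    have hgP : 0 < g P := (mul_pos hK₁ hPa).trans_le hlow
    have hK₂ : 0 < K₂ := pos_of_mul_pos_left (hgP.trans_le hupp) hPa.le
    have hlogP : 0 ≤ log P := (log_pos hP).le
    rw [← h_log_mul hK₁ (by linarith), ← h_log_mul hK₂ (by linarith)]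
    exact ⟨by gcongr, by gcongr⟩
  exact tendsto_of_tendsto_of_tendsto_of_le_of_le' (h_lim K₁) (h_lim K₂)
    (h_bounds.mono fun _ => And.left) (h_bounds.mono fun _ => And.right)

lemma tendsto_log_one_add_rpow_div_div_log {b c : ℝ} (hb : 0 ≤ b) (hc : 0 < c) :
    Tendsto (fun P => log (1 + P ^ b / c) / log P) atTop (𝓝 b) := by
  refine tendsto_log_div_log_of_rpow_bounds_s16 (K₂ := 1 + c⁻¹) (inv_pos.mpr hc) ?_
  filter_upwards [eventually_ge_atTop 1] with P hP
  have hPb : 1 ≤ P ^ b := one_le_rpow hP hb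
  rw [div_eq_inv_mul]
  constructor <;> nlinarith

lemma tendsto_log_one_add_rpow_mul_add_rpow_mul_div_log {b₁ b₂ c₁ c₂ : ℝ}
    (hb : 0 ≤ max b₁ b₂) (hc₁ : 0 < c₁) (hc₂ : 0 < c₂) :
    Tendsto (fun P => log (1 + P ^ b₁ * c₁ + P ^ b₂ * c₂) / log P) atTop (𝓝 (max b₁ b₂)) := by
  refine tendsto_log_div_log_of_rpow_bounds_s16 (K₂ := 1 + c₁ + c₂) (lt_min hc₁ hc₂) ?_
  filter_upwards [eventually_ge_atTop 1] with P hP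
  have hP₁ : P ^ b₁ ≤ P ^ max b₁ b₂ := rpow_le_rpow_of_exponent_le hP (le_max_left _ _)
  have hP₂ : P ^ b₂ ≤ P ^ max b₁ b₂ := rpow_le_rpow_of_exponent_le hP (le_max_right _ _)
  have hPmax : 1 ≤ P ^ max b₁ b₂ := one_le_rpow hP hb
  have hPpos (b : ℝ) : 0 < P ^ b := rpow_pos_of_pos (by linarith) b
  refine ⟨?_, by nlinarith⟩
  rcases max_cases b₁ b₂ with ⟨hmax, -⟩ | ⟨hmax, -⟩ <;> rw [hmax] <;>
    nlinarith [min_le_left c₁ c₂, min_le_right c₁ c₂, hPpos b₁, hPpos b₂]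

lemma half_logb_div_half_logb (b x P : ℝ) (hb : log b ≠ 0) :
    (1 / 2) * logb b x / ((1 / 2) * logb b P) = log x / log P := by
  rw [mul_div_mul_left _ _ (by norm_num), logb, logb, div_div_div_cancel_right₀ hb]

theorem weighted_bounds_sum_gdof_general
    (α₁₁ α₁₂ α₂₁ α₂₂ h₁₁ h₁₂ h₂₁ h₂₂ : ℝ)
    (hα₁₁ : 0 ≤ α₁₁) (hα₂₂ : 0 ≤ α₂₂)
    (hh₁₁ : h₁₁ ∈ Set.Ioc (1 : ℝ) 2) (hh₁₂ : h₁₂ ∈ Set.Ioc (1 : ℝ) 2)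
    (hh₂₁ : h₂₁ ∈ Set.Ioc (1 : ℝ) 2) (hh₂₂ : h₂₂ ∈ Set.Ioc (1 : ℝ) 2) :
    Tendsto (fun P : ℝ =>
        (((1 / 2) * Real.logb 2 (1 + P ^ (max (α₁₁ - α₂₁) 0) / |h₂₁| ^ 2)
            + (1 / 2) * Real.logb 2 (1 + P ^ (max (α₂₂ - α₁₂) 0) / |h₁₂| ^ 2)
            + (1 / 2) * Real.logb 2 (1 + P ^ α₁₁ * |h₁₁| ^ 2 + P ^ α₁₂ * |h₁₂| ^ 2)
            + Real.logb 2 9)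
          + ((1 / 2) * Real.logb 2 (1 + P ^ (max (α₂₂ - α₁₂) 0) / |h₁₂| ^ 2)
              + (1 / 2) * Real.logb 2 (1 + P ^ (max (α₁₁ - α₂₁) 0) / |h₁₂| ^ 2)
              + (1 / 2) * Real.logb 2 (1 + P ^ α₂₂ * |h₂₂| ^ 2 + P ^ α₂₁ * |h₂₁| ^ 2)
              + Real.logb 2 9))
          / ((1 / 2) * Real.logb 2 P))
      atTop (nhds
        (max α₁₁ α₁₂ + max α₂₂ α₂₁
          + 2 * max (α₁₁ - α₂₁) 0 + 2 * max (α₂₂ - α₁₂) 0)) := by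
  have hsq_pos {h : ℝ} (hh : h ∈ Set.Ioc (1 : ℝ) 2) : 0 < |h| ^ 2 := by
    have : h ≠ 0 := by linarith [hh.1]
    positivity
  have hlog2 : log 2 ≠ 0 := by positivity
  have hconst : Tendsto (fun P => logb 2 9 / ((1 / 2) * logb 2 P)) atTop (𝓝 0) :=
    tendsto_const_nhds.div_atTop ((tendsto_logb_atTop one_lt_two).const_mul_atTop one_half_pos)
  have h₁ := tendsto_log_one_add_rpow_div_div_log (le_max_right (α₁₁ - α₂₁) 0) (hsq_pos hh₂₁)
  have h₂ := tendsto_log_one_add_rpow_div_div_log (le_max_right (α₂₂ - α₁₂) 0) (hsq_pos hh₁₂)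
  have h₃ := tendsto_log_one_add_rpow_mul_add_rpow_mul_div_log (b₂ := α₁₂)
    (le_max_of_le_left hα₁₁) (hsq_pos hh₁₁) (hsq_pos hh₁₂)
  have h₄ := tendsto_log_one_add_rpow_div_div_log (le_max_right (α₁₁ - α₂₁) 0) (hsq_pos hh₁₂)
  have h₅ := tendsto_log_one_add_rpow_mul_add_rpow_mul_div_log (b₂ := α₂₁)
    (le_max_of_le_left hα₂₂) (hsq_pos hh₂₂) (hsq_pos hh₂₁)
  simp only [add_div, half_logb_div_half_logb 2 _ _ hlog2]
  convert (((((((h₁.add h₂).add h₃).add hconst).add h₂).add h₄).add h₅).add hconst) using 2 <;>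
    ring

/-- The sum of the two `2R₁ + R₂`- and `2R₂ + R₁`-type upper bounds, normalized by
`(1/2)·log P`, converges to the corresponding GDoF expression as `P → ∞`. -/
theorem weighted_bounds_sum_gdof
    (α₁₁ α₁₂ α₂₁ α₂₂ h₁₁ h₁₂ h₂₁ h₂₂ : ℝ)
    (hα₁₁ : 0 ≤ α₁₁) (hα₁₂ : 0 ≤ α₁₂) (hα₂₁ : 0 ≤ α₂₁) (hα₂₂ : 0 ≤ α₂₂)
    (hh₁₁ : h₁₁ ∈ Set.Ioc (1 : ℝ) 2) (hh₁₂ : h₁₂ ∈ Set.Ioc (1 : ℝ) 2)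
    (hh₂₁ : h₂₁ ∈ Set.Ioc (1 : ℝ) 2) (hh₂₂ : h₂₂ ∈ Set.Ioc (1 : ℝ) 2) :
    Tendsto (fun P : ℝ =>
        (((1 / 2) * Real.logb 2 (1 + P ^ (max (α₁₁ - α₂₁) 0) / |h₂₁| ^ 2)
            + (1 / 2) * Real.logb 2 (1 + P ^ (max (α₂₂ - α₁₂) 0) / |h₁₂| ^ 2)
            + (1 / 2) * Real.logb 2 (1 + P ^ α₁₁ * |h₁₁| ^ 2 + P ^ α₁₂ * |h₁₂| ^ 2)
            + Real.logb 2 9)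
          + ((1 / 2) * Real.logb 2 (1 + P ^ (max (α₂₂ - α₁₂) 0) / |h₁₂| ^ 2)
              + (1 / 2) * Real.logb 2 (1 + P ^ (max (α₁₁ - α₂₁) 0) / |h₁₂| ^ 2)
              + (1 / 2) * Real.logb 2 (1 + P ^ α₂₂ * |h₂₂| ^ 2 + P ^ α₂₁ * |h₂₁| ^ 2)
              + Real.logb 2 9))
          / ((1 / 2) * Real.logb 2 P))
      atTop (nhds
        (max α₁₁ α₁₂ + max α₂₂ α₂₁
          + 2 * max (α₁₁ - α₂₁) 0 + 2 * max (α₂₂ - α₁₂) 0)) :=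
  weighted_bounds_sum_gdof_general α₁₁ α₁₂ α₂₁ α₂₂ h₁₁ h₁₂ h₂₁ h₂₂ hα₁₁ hα₂₂ hh₁₁ hh₁₂ hh₂₁ hh₂₂
end
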